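/- arXiv:2104.14458 — 5 statements merged into one kernel-verified Lean document; each statement's English description precedes it below -/
import Mathlib

section
/- Let (Ω,𝓕,P) be a probability space and U : Ω × ℝ → ℝ be such that ω ↦ U(ω,z) is measurable and integrable for each z below. Let a ≤ b be reals and suppose U is locally concave or convex on [a,b], meaning: either for P-a.e. ω the map z ↦ U(ω,z) is twice differentiable on [a,b] with second derivative ≤ 0 everywhere on [a,b], or for P-a.e. ω it is twice differentiable on [a,b] with second derivative ≥ 0 everywhere on [a,b]. Let x, x′, x_1, x_2 ∈ [a,b] satisfy x < x′, x_1 ≤ x′ ≤ x_2, x_1 ≠ x and x_2 ≠ x. For z ≠ x define S(z) := E[U(·,z) − U(·,x)]/(z − x). Then (x′ − x)·min{S(x_1), S(x_2)} ≤ E[U(·,x′) − U(·,x)] ≤ (x′ − x)·max{S(x_1), S(x_2)}. -/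
/-!
Almost surely every `U ω` is convex on `[a, b]`, or almost surely every `U ω` is concave there,
so its slope `z ↦ (U ω z - U ω x) / (z - x)` from `x` is monotone on `[a, b] \ {x}`. Integrating
preserves monotonicity, and the integrated slope at `z` is `S z`; hence `S x'` lies between
`S x₁` and `S x₂`, and multiplying by `x' - x > 0` gives the bounds.
-/

open MeasureTheory Set

lemma convexOn_of_forall_hasDerivWithinAt2_nonneg {D : Set ℝ} (hD : Convex ℝ D)
    {f f' f'' : ℝ → ℝ}
    (h : ∀ z ∈ D, HasDerivWithinAt f (f' z) D z ∧ HasDerivWithinAt f' (f'' z) D z ∧ 0 ≤ f'' z) :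
    ConvexOn ℝ D f :=
  convexOn_of_hasDerivWithinAt2_nonneg hD (fun z hz => (h z hz).1.continuousWithinAt)
    (fun z hz => (h z (interior_subset hz)).1.mono interior_subset)
    (fun z hz => (h z (interior_subset hz)).2.1.mono interior_subset)
    (fun z hz => (h z (interior_subset hz)).2.2)

lemma concaveOn_of_forall_hasDerivWithinAt2_nonpos {D : Set ℝ} (hD : Convex ℝ D)
    {f f' f'' : ℝ → ℝ}
    (h : ∀ z ∈ D, HasDerivWithinAt f (f' z) D z ∧ HasDerivWithinAt f' (f'' z) D z ∧ f'' z ≤ 0) :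
    ConcaveOn ℝ D f :=
  concaveOn_of_hasDerivWithinAt2_nonpos hD (fun z hz => (h z hz).1.continuousWithinAt)
    (fun z hz => (h z (interior_subset hz)).1.mono interior_subset)
    (fun z hz => (h z (interior_subset hz)).2.1.mono interior_subset)
    (fun z hz => (h z (interior_subset hz)).2.2)

section Integral

variable {Ω : Type*} [MeasurableSpace Ω] {μ : Measure Ω}

lemma monotoneOn_integral_of_ae_monotoneOn {g : Ω → ℝ → ℝ} {t : Set ℝ}
    (hg : ∀ᵐ ω ∂μ, MonotoneOn (g ω) t) (hint : ∀ z ∈ t, Integrable (fun ω => g ω z) μ) :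
    MonotoneOn (fun z => ∫ ω, g ω z ∂μ) t :=
  fun y hy z hz hyz => integral_mono_ae (hint y hy) (hint z hz) (hg.mono fun _ hω => hω hy hz hyz)

lemma antitoneOn_integral_of_ae_antitoneOn {g : Ω → ℝ → ℝ} {t : Set ℝ}
    (hg : ∀ᵐ ω ∂μ, AntitoneOn (g ω) t) (hint : ∀ z ∈ t, Integrable (fun ω => g ω z) μ) :
    AntitoneOn (fun z => ∫ ω, g ω z ∂μ) t :=
  fun y hy z hz hyz => integral_mono_ae (hint z hz) (hint y hy) (hg.mono fun _ hω => hω hy hz hyz)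

lemma integral_slope_eq (f : Ω → ℝ → ℝ) (x z : ℝ) :
    ∫ ω, slope (f ω) x z ∂μ = (∫ ω, (f ω z - f ω x) ∂μ) / (z - x) := by
  simp only [slope_def_field, integral_div]

lemma integral_slope_mem_uIcc {f : Ω → ℝ → ℝ} {s : Set ℝ} {x y y₁ y₂ : ℝ}
    (hf : (∀ᵐ ω ∂μ, ConvexOn ℝ s (f ω)) ∨ ∀ᵐ ω ∂μ, ConcaveOn ℝ s (f ω))
    (hx : x ∈ s) (hy : y ∈ s \ {x}) (hy₁ : y₁ ∈ s \ {x}) (hy₂ : y₂ ∈ s \ {x})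
    (hy₁y : y₁ ≤ y) (hyy₂ : y ≤ y₂)
    (hint : ∀ z ∈ ({x, y, y₁, y₂} : Set ℝ), Integrable (fun ω => f ω z) μ) :
    ∫ ω, slope (f ω) x y ∂μ ∈ uIcc (∫ ω, slope (f ω) x y₁ ∂μ) (∫ ω, slope (f ω) x y₂ ∂μ) := by
  set t : Set ℝ := {y, y₁, y₂}
  have ht : t ⊆ s \ {x} := by simp only [t, insert_subset_iff, singleton_subset_iff]; tauto
  have hint_slope : ∀ z ∈ t, Integrable (fun ω => slope (f ω) x z) μ := fun z hz => by
    simpa only [slope_def_field, Pi.sub_apply] using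
      ((hint z (mem_insert_of_mem _ hz)).sub (hint x (mem_insert _ _))).div_const (z - x)
  have hy_t : y ∈ t := by simp [t]
  have hy₁_t : y₁ ∈ t := by simp [t]
  have hy₂_t : y₂ ∈ t := by simp [t]
  rcases hf with hconvex | hconcave
  · have hmono := monotoneOn_integral_of_ae_monotoneOn
      (hconvex.mono fun _ hω => (hω.slope_mono hx).mono ht) hint_slope
    exact mem_uIcc.2 (Or.inl ⟨hmono hy₁_t hy_t hy₁y, hmono hy_t hy₂_t hyy₂⟩)
  · have hanti := antitoneOn_integral_of_ae_antitoneOn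
      (hconcave.mono fun _ hω => (hω.slope_anti hx).mono ht) hint_slope
    exact mem_uIcc.2 (Or.inr ⟨hanti hy_t hy₂_t hyy₂, hanti hy₁_t hy_t hy₁y⟩)

end Integral

theorem stmt4_general
    {Ω : Type*} [MeasurableSpace Ω] (P : Measure Ω)
    (U : Ω → ℝ → ℝ) (a b : ℝ)
    (x x' x₁ x₂ : ℝ)
    (hx : x ∈ Icc a b) (hx' : x' ∈ Icc a b) (hx₁ : x₁ ∈ Icc a b) (hx₂ : x₂ ∈ Icc a b)
    -- measurability and integrability of ω ↦ U(ω,z) for each z involved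
    (hint : ∀ z ∈ ({x, x', x₁, x₂} : Set ℝ), Integrable (fun ω => U ω z) P)
    -- local concavity or convexity on [a,b]: either a.e. twice differentiable with
    -- second derivative ≤ 0 everywhere on [a,b], or a.e. with second derivative ≥ 0
    (hconcavex :
      (∀ᵐ ω ∂P, ∃ U' U'' : ℝ → ℝ, ∀ z ∈ Icc a b,
        HasDerivWithinAt (U ω) (U' z) (Icc a b) z ∧
        HasDerivWithinAt U' (U'' z) (Icc a b) z ∧ U'' z ≤ 0) ∨
      (∀ᵐ ω ∂P, ∃ U' U'' : ℝ → ℝ, ∀ z ∈ Icc a b,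
        HasDerivWithinAt (U ω) (U' z) (Icc a b) z ∧
        HasDerivWithinAt U' (U'' z) (Icc a b) z ∧ 0 ≤ U'' z))
    (hxx' : x < x') (hx₁x' : x₁ ≤ x') (hx'x₂ : x' ≤ x₂) (hne₁ : x₁ ≠ x) (hne₂ : x₂ ≠ x)
    (S : ℝ → ℝ) (hS : ∀ z, S z = (∫ ω, (U ω z - U ω x) ∂P) / (z - x)) :
    (x' - x) * min (S x₁) (S x₂) ≤ (∫ ω, (U ω x' - U ω x) ∂P) ∧
      (∫ ω, (U ω x' - U ω x) ∂P) ≤ (x' - x) * max (S x₁) (S x₂) := by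
  have hconv : (∀ᵐ ω ∂P, ConvexOn ℝ (Icc a b) (U ω)) ∨ ∀ᵐ ω ∂P, ConcaveOn ℝ (Icc a b) (U ω) :=
    hconcavex.symm.imp
      (·.mono fun _ ⟨_, _, h⟩ => convexOn_of_forall_hasDerivWithinAt2_nonneg (convex_Icc a b) h)
      (·.mono fun _ ⟨_, _, h⟩ => concaveOn_of_forall_hasDerivWithinAt2_nonpos (convex_Icc a b) h)
  have hmid : S x' ∈ uIcc (S x₁) (S x₂) := by
    simpa only [hS, integral_slope_eq] using integral_slope_mem_uIcc hconv hx ⟨hx', hxx'.ne'⟩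
      ⟨hx₁, hne₁⟩ ⟨hx₂, hne₂⟩ hx₁x' hx'x₂ hint
  have hATT : ∫ ω, (U ω x' - U ω x) ∂P = (x' - x) * S x' := by
    rw [hS]
    field_simp [sub_ne_zero.2 hxx'.ne']
  have hpos : 0 ≤ x' - x := sub_nonneg.2 hxx'.le
  rw [hATT]
  exact ⟨mul_le_mul_of_nonneg_left hmid.1 hpos, mul_le_mul_of_nonneg_left hmid.2 hpos⟩

/-- bounds on the average treatment effect `E[U(·,x') − U(·,x)]` under a
local concavity-or-convexity condition, in terms of the normalized effects
`S(z) = E[U(·,z) − U(·,x)]/(z − x)` at identified points `x₁ ≤ x' ≤ x₂`. -/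
theorem stmt4
    {Ω : Type*} [MeasurableSpace Ω] (P : Measure Ω) (hP : IsProbabilityMeasure P)
    (U : Ω → ℝ → ℝ) (a b : ℝ) (hab : a ≤ b)
    (x x' x₁ x₂ : ℝ)
    (hx : x ∈ Icc a b) (hx' : x' ∈ Icc a b) (hx₁ : x₁ ∈ Icc a b) (hx₂ : x₂ ∈ Icc a b)
    -- measurability and integrability of ω ↦ U(ω,z) for each z involved
    (hmeas : ∀ z ∈ ({x, x', x₁, x₂} : Set ℝ), Measurable (fun ω => U ω z))
    (hint : ∀ z ∈ ({x, x', x₁, x₂} : Set ℝ), Integrable (fun ω => U ω z) P)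
    -- local concavity or convexity on [a,b]: either a.e. twice differentiable with
    -- second derivative ≤ 0 everywhere on [a,b], or a.e. with second derivative ≥ 0
    (hconcavex :
      (∀ᵐ ω ∂P, ∃ U' U'' : ℝ → ℝ, ∀ z ∈ Icc a b,
        HasDerivWithinAt (U ω) (U' z) (Icc a b) z ∧
        HasDerivWithinAt U' (U'' z) (Icc a b) z ∧ U'' z ≤ 0) ∨
      (∀ᵐ ω ∂P, ∃ U' U'' : ℝ → ℝ, ∀ z ∈ Icc a b,
        HasDerivWithinAt (U ω) (U' z) (Icc a b) z ∧
        HasDerivWithinAt U' (U'' z) (Icc a b) z ∧ 0 ≤ U'' z))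
    (hxx' : x < x') (hx₁x' : x₁ ≤ x') (hx'x₂ : x' ≤ x₂) (hne₁ : x₁ ≠ x) (hne₂ : x₂ ≠ x)
    (S : ℝ → ℝ) (hS : ∀ z, S z = (∫ ω, (U ω z - U ω x) ∂P) / (z - x)) :
    (x' - x) * min (S x₁) (S x₂) ≤ (∫ ω, (U ω x' - U ω x) ∂P) ∧
      (∫ ω, (U ω x' - U ω x) ∂P) ≤ (x' - x) * max (S x₁) (S x₂) :=
  stmt4_general P U a b x x' x₁ x₂ hx hx' hx₁ hx₂ hint hconcavex hxx' hx₁x' hx'x₂ hne₁ hne₂ S hS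
end

section
/- Let (Ω,𝓕,P) be a probability space and U : Ω × ℝ → ℝ be such that ω ↦ U(ω,z) is measurable and integrable for each z below. Let a ≤ b be reals and suppose U is locally concave or convex on [a,b], meaning: either for P-a.e. ω the map z ↦ U(ω,z) is twice differentiable on [a,b] with second derivative ≤ 0 everywhere on [a,b], or for P-a.e. ω it is twice differentiable on [a,b] with second derivative ≥ 0 everywhere on [a,b]. Let x, x_1, x_2 ∈ [a,b] with x_1 < x < x_2, and suppose ω ↦ ∂U/∂z(ω,x) is integrable. For z ≠ x define S(z) := E[U(·,z) − U(·,x)]/(z − x). Then min{S(x_1), S(x_2)} ≤ E[∂U/∂z(·,x)] ≤ max{S(x_1), S(x_2)}. -/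
open MeasureTheory Set Filter

/-!
A function that is concave (convex) on an interval has, at an interior point `x`, a derivative
squeezed between the slopes of its secants from `x` to points `x₁ < x < x₂`. Applying this to
`U(ω, ·)` for almost every `ω` and integrating the resulting inequalities in `ω` gives the bounds,
since the integral of the slope `(U(ω,z) − U(ω,x))/(z − x)` is exactly `S(z)`.
-/

section TwiceDifferentiable

variable {D : Set ℝ} {f f' f'' : ℝ → ℝ}

theorem Convex.convexOn_of_hasDerivWithinAt2_nonneg (hD : Convex ℝ D)
    (hf' : ∀ x ∈ D, HasDerivWithinAt f (f' x) D x)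
    (hf'' : ∀ x ∈ D, HasDerivWithinAt f' (f'' x) D x) (hf''₀ : ∀ x ∈ D, 0 ≤ f'' x) :
    ConvexOn ℝ D f :=
  _root_.convexOn_of_hasDerivWithinAt2_nonneg hD
    (fun x hx => (hf' x hx).differentiableWithinAt.continuousWithinAt)
    (fun x hx => (hf' x (interior_subset hx)).mono interior_subset)
    (fun x hx => (hf'' x (interior_subset hx)).mono interior_subset)
    (fun x hx => hf''₀ x (interior_subset hx))

theorem Convex.concaveOn_of_hasDerivWithinAt2_nonpos (hD : Convex ℝ D)
    (hf' : ∀ x ∈ D, HasDerivWithinAt f (f' x) D x)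
    (hf'' : ∀ x ∈ D, HasDerivWithinAt f' (f'' x) D x) (hf''₀ : ∀ x ∈ D, f'' x ≤ 0) :
    ConcaveOn ℝ D f :=
  _root_.concaveOn_of_hasDerivWithinAt2_nonpos hD
    (fun x hx => (hf' x hx).differentiableWithinAt.continuousWithinAt)
    (fun x hx => (hf' x (interior_subset hx)).mono interior_subset)
    (fun x hx => (hf'' x (interior_subset hx)).mono interior_subset)
    (fun x hx => hf''₀ x (interior_subset hx))

end TwiceDifferentiable

section SecantSlopes

variable {S : Set ℝ} {f : ℝ → ℝ} {x x₁ x₂ d : ℝ}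

theorem ConvexOn.hasDerivWithinAt_mem_Icc_slope (hf : ConvexOn ℝ S f) (hx₁ : x₁ ∈ S)
    (hx : x ∈ S) (hx₂ : x₂ ∈ S) (h₁ : x₁ < x) (h₂ : x < x₂) (hd : HasDerivWithinAt f d S x) :
    d ∈ Icc (slope f x x₁) (slope f x x₂) :=
  ⟨slope_comm f x x₁ ▸ hf.slope_le_of_hasDerivWithinAt hx₁ hx h₁ hd,
    hf.le_slope_of_hasDerivWithinAt hx hx₂ h₂ hd⟩

theorem ConcaveOn.hasDerivWithinAt_mem_Icc_slope (hf : ConcaveOn ℝ S f) (hx₁ : x₁ ∈ S)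
    (hx : x ∈ S) (hx₂ : x₂ ∈ S) (h₁ : x₁ < x) (h₂ : x < x₂) (hd : HasDerivWithinAt f d S x) :
    d ∈ Icc (slope f x x₂) (slope f x x₁) :=
  ⟨hf.slope_le_of_hasDerivWithinAt hx hx₂ h₂ hd,
    slope_comm f x x₁ ▸ hf.le_slope_of_hasDerivWithinAt hx₁ hx h₁ hd⟩

end SecantSlopes

section IntegratedSlopes

variable {Ω : Type*} [MeasurableSpace Ω] {P : Measure Ω} {U : Ω → ℝ → ℝ} {D : Ω → ℝ}
  {x y z : ℝ}

theorem integral_slope :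
    ∫ ω, slope (U ω) x z ∂P = (∫ ω, (U ω z - U ω x) ∂P) / (z - x) := by
  simp only [slope_def_field]
  exact integral_div _ _

theorem MeasureTheory.Integrable.slope (hx : Integrable (fun ω => U ω x) P)
    (hz : Integrable (fun ω => U ω z) P) : Integrable (fun ω => slope (U ω) x z) P := by
  simp only [slope_def_field]
  exact (hz.sub hx).div_const _

theorem integral_mem_Icc_of_ae_mem_Icc_slope (hx : Integrable (fun ω => U ω x) P)
    (hy : Integrable (fun ω => U ω y) P) (hz : Integrable (fun ω => U ω z) P)
    (hD : Integrable D P) (h : ∀ᵐ ω ∂P, D ω ∈ Icc (slope (U ω) x y) (slope (U ω) x z)) :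
    ∫ ω, D ω ∂P ∈ Icc ((∫ ω, (U ω y - U ω x) ∂P) / (y - x))
      ((∫ ω, (U ω z - U ω x) ∂P) / (z - x)) := by
  rw [← integral_slope, ← integral_slope]
  exact ⟨integral_mono_ae (hx.slope hy) hD (h.mono fun _ => And.left),
    integral_mono_ae hD (hx.slope hz) (h.mono fun _ => And.right)⟩

end IntegratedSlopes

theorem stmt5_general
    {Ω : Type*} [MeasurableSpace Ω] (P : Measure Ω)
    (U : Ω → ℝ → ℝ) (a b : ℝ)
    (x x₁ x₂ : ℝ)
    (hx : x ∈ Icc a b) (hx₁ : x₁ ∈ Icc a b) (hx₂ : x₂ ∈ Icc a b)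
    (hint : ∀ z ∈ ({x, x₁, x₂} : Set ℝ), Integrable (fun ω => U ω z) P)
    -- local concavity or convexity on [a,b]
    (hconcavex :
      (∀ᵐ ω ∂P, ∃ U' U'' : ℝ → ℝ, ∀ z ∈ Icc a b,
        HasDerivWithinAt (U ω) (U' z) (Icc a b) z ∧
        HasDerivWithinAt U' (U'' z) (Icc a b) z ∧ U'' z ≤ 0) ∨
      (∀ᵐ ω ∂P, ∃ U' U'' : ℝ → ℝ, ∀ z ∈ Icc a b,
        HasDerivWithinAt (U ω) (U' z) (Icc a b) z ∧
        HasDerivWithinAt U' (U'' z) (Icc a b) z ∧ 0 ≤ U'' z))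
    (hx₁x : x₁ < x) (hxx₂ : x < x₂)
    -- the (partial) derivative of U in its second argument at x, integrable
    (D : Ω → ℝ) (hD : ∀ᵐ ω ∂P, HasDerivWithinAt (U ω) (D ω) (Icc a b) x)
    (hDint : Integrable D P)
    (S : ℝ → ℝ) (hS : ∀ z, S z = (∫ ω, (U ω z - U ω x) ∂P) / (z - x)) :
    min (S x₁) (S x₂) ≤ (∫ ω, D ω ∂P) ∧ (∫ ω, D ω ∂P) ≤ max (S x₁) (S x₂) := by
  have hUx := hint x (by simp)
  have hUx₁ := hint x₁ (by simp)
  have hUx₂ := hint x₂ (by simp)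
  simp only [hS]
  rcases hconcavex with hconc | hconv
  · have h : ∀ᵐ ω ∂P, D ω ∈ Icc (slope (U ω) x x₂) (slope (U ω) x x₁) := by
      filter_upwards [hconc, hD] with ω ⟨U', U'', hU⟩ hDω
      exact ((convex_Icc a b).concaveOn_of_hasDerivWithinAt2_nonpos (fun z hz => (hU z hz).1)
        (fun z hz => (hU z hz).2.1) (fun z hz => (hU z hz).2.2)).hasDerivWithinAt_mem_Icc_slope
          hx₁ hx hx₂ hx₁x hxx₂ hDω
    have hI := integral_mem_Icc_of_ae_mem_Icc_slope hUx hUx₂ hUx₁ hDint h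
    exact ⟨min_le_of_right_le hI.1, le_max_of_le_left hI.2⟩
  · have h : ∀ᵐ ω ∂P, D ω ∈ Icc (slope (U ω) x x₁) (slope (U ω) x x₂) := by
      filter_upwards [hconv, hD] with ω ⟨U', U'', hU⟩ hDω
      exact ((convex_Icc a b).convexOn_of_hasDerivWithinAt2_nonneg (fun z hz => (hU z hz).1)
        (fun z hz => (hU z hz).2.1) (fun z hz => (hU z hz).2.2)).hasDerivWithinAt_mem_Icc_slope
          hx₁ hx hx₂ hx₁x hxx₂ hDω
    have hI := integral_mem_Icc_of_ae_mem_Icc_slope hUx hUx₁ hUx₂ hDint h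
    exact ⟨min_le_of_left_le hI.1, le_max_of_le_right hI.2⟩

/-- bounds on the average marginal effect `E[∂U/∂z(·,x)]` under a local
concavity-or-convexity condition, in terms of the normalized effects
`S(z) = E[U(·,z) − U(·,x)]/(z − x)` at identified points `x₁ < x < x₂`. -/
theorem stmt5
    {Ω : Type*} [MeasurableSpace Ω] (P : Measure Ω) (hP : IsProbabilityMeasure P)
    (U : Ω → ℝ → ℝ) (a b : ℝ) (hab : a ≤ b)
    (x x₁ x₂ : ℝ)
    (hx : x ∈ Icc a b) (hx₁ : x₁ ∈ Icc a b) (hx₂ : x₂ ∈ Icc a b)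
    -- measurability and integrability of ω ↦ U(ω,z) for each z involved
    (hmeas : ∀ z ∈ ({x, x₁, x₂} : Set ℝ), Measurable (fun ω => U ω z))
    (hint : ∀ z ∈ ({x, x₁, x₂} : Set ℝ), Integrable (fun ω => U ω z) P)
    -- local concavity or convexity on [a,b]
    (hconcavex :
      (∀ᵐ ω ∂P, ∃ U' U'' : ℝ → ℝ, ∀ z ∈ Icc a b,
        HasDerivWithinAt (U ω) (U' z) (Icc a b) z ∧
        HasDerivWithinAt U' (U'' z) (Icc a b) z ∧ U'' z ≤ 0) ∨
      (∀ᵐ ω ∂P, ∃ U' U'' : ℝ → ℝ, ∀ z ∈ Icc a b,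
        HasDerivWithinAt (U ω) (U' z) (Icc a b) z ∧
        HasDerivWithinAt U' (U'' z) (Icc a b) z ∧ 0 ≤ U'' z))
    (hx₁x : x₁ < x) (hxx₂ : x < x₂)
    -- the (partial) derivative of U in its second argument at x, integrable
    (D : Ω → ℝ) (hD : ∀ᵐ ω ∂P, HasDerivWithinAt (U ω) (D ω) (Icc a b) x)
    (hDmeas : Measurable D) (hDint : Integrable D P)
    (S : ℝ → ℝ) (hS : ∀ z, S z = (∫ ω, (U ω z - U ω x) ∂P) / (z - x)) :
    min (S x₁) (S x₂) ≤ (∫ ω, D ω ∂P) ∧ (∫ ω, D ω ∂P) ≤ max (S x₁) (S x₂) :=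
  stmt5_general P U a b x x₁ x₂ hx hx₁ hx₂ hint hconcavex hx₁x hxx₂ D hD hDint S hS
end

section
/- Let κ be a Markov kernel assigning to each x ∈ ℝ a probability measure κ(x) on a measurable space Ω, let 𝒱 be an open interval containing x_0 ∈ ℝ, and let U : Ω × ℝ → ℝ be jointly measurable. Assume: (i) for every x ∈ 𝒱 and κ(x)-a.e. ω, the map z ↦ U(ω,z) is differentiable on 𝒱 and there is a measurable A : Ω → [0,∞) with |∂U/∂z(ω,z′) − ∂U/∂z(ω,z)| ≤ A(ω)|z′ − z| for all z, z′ ∈ 𝒱, such that x ↦ ∫ A dκ(x) is finite and continuous on 𝒱; (ii) for every z′ ∈ 𝒱, the map x ↦ ∫ ∂U/∂z(ω,z′) dκ(x)(ω) is continuous on 𝒱. Let (x_n) be a sequence in 𝒱 with x_n → x_0 and let q : ℝ → ℝ satisfy q(x_n) ∈ 𝒱, q(x_n) ≠ x_n and q(x_n) → x_0. Then ∫ [U(ω, q(x_n)) − U(ω, x_n)]/(q(x_n) − x_n) dκ(x_n)(ω) → ∫ ∂U/∂z(ω, x_0) dκ(x_0)(ω) as n → ∞. -/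
/-!
Write `a = xₙ`, `b = q(xₙ)`. Since `U'(ω, ·)` is `A ω`-Lipschitz, the mean value inequality
applied to `z ↦ U(ω, z) - U'(ω, a) z` on `[a, b]` bounds the difference quotient's distance to
`U'(ω, a)` by `A ω |b - a|`, and `U'(ω, a)` is within `A ω |a - x₀|` of `U'(ω, x₀)`. Integrating,
the normalized effect differs from `∫ U'(ω, x₀) dκ(xₙ)` by at most `cₙ ∫ A dκ(xₙ)` with `cₙ → 0`,
and both conditional means converge by continuity in `x`.
-/

open MeasureTheory Set Filter ProbabilityTheory Topology

theorem abs_sub_sub_deriv_mul_le {f f' : ℝ → ℝ} {a b L : ℝ}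
    (hf : ∀ z ∈ uIcc a b, HasDerivAt f (f' z) z)
    (hf' : ∀ z ∈ uIcc a b, |f' z - f' a| ≤ L * |z - a|) :
    |f b - f a - f' a * (b - a)| ≤ L * |b - a| ^ 2 := by
  rcases eq_or_ne b a with rfl | hba
  · simp
  -- `L ≥ 0` is forced by the Lipschitz bound at `z = b ≠ a`.
  have hL : 0 ≤ L := nonneg_of_mul_nonneg_left ((abs_nonneg _).trans (hf' b right_mem_uIcc))
    (abs_pos.2 (sub_ne_zero.2 hba))
  have hmvt := Convex.norm_image_sub_le_of_norm_hasDerivWithin_le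
    (f := fun z => f z - f' a * z) (f' := fun z => f' z - f' a) (C := L * |b - a|)
    (fun z hz => (((hf z hz).sub ((hasDerivAt_id z).const_mul (f' a))).congr_deriv
      (by ring)).hasDerivWithinAt)
    (fun z hz => (hf' z hz).trans (mul_le_mul_of_nonneg_left (abs_sub_left_of_mem_uIcc hz) hL))
    (convex_uIcc a b) left_mem_uIcc right_mem_uIcc
  simp only [Real.norm_eq_abs] at hmvt
  calc |f b - f a - f' a * (b - a)| = |f b - f' a * b - (f a - f' a * a)| := by ring_nf
    _ ≤ L * |b - a| * |b - a| := hmvt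
    _ = L * |b - a| ^ 2 := by ring

theorem abs_slope_sub_deriv_le {f f' : ℝ → ℝ} {s : Set ℝ} (hs : s.OrdConnected) {L x₀ a b : ℝ}
    (hf : ∀ z ∈ s, HasDerivAt f (f' z) z)
    (hf' : ∀ z ∈ s, ∀ z' ∈ s, |f' z' - f' z| ≤ L * |z' - z|)
    (hx₀ : x₀ ∈ s) (ha : a ∈ s) (hb : b ∈ s) (hab : b ≠ a) :
    |(f b - f a) / (b - a) - f' x₀| ≤ L * (|b - a| + |a - x₀|) := by
  have hsub : uIcc a b ⊆ s := hs.uIcc_subset ha hb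
  have hba : 0 < |b - a| := abs_pos.2 (sub_ne_zero.2 hab)
  have hslope : |(f b - f a) / (b - a) - f' a| ≤ L * |b - a| := by
    have htaylor := abs_sub_sub_deriv_mul_le (fun z hz => hf z (hsub hz))
      (fun z hz => hf' a ha z (hsub hz))
    rw [← mul_le_mul_iff_left₀ hba, ← abs_mul, sub_mul, div_mul_cancel₀ _ (sub_ne_zero.2 hab)]
    linarith
  calc |(f b - f a) / (b - a) - f' x₀|
      ≤ |(f b - f a) / (b - a) - f' a| + |f' a - f' x₀| := abs_sub_le _ _ _
    _ ≤ L * |b - a| + L * |a - x₀| := add_le_add hslope (hf' x₀ hx₀ a ha)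
    _ = L * (|b - a| + |a - x₀|) := by ring

theorem tendsto_integral_of_abs_sub_le_mul {Ω ι : Type*} [MeasurableSpace Ω] {l : Filter ι}
    {μ : ι → Measure Ω} {g : ι → Ω → ℝ} {h A : Ω → ℝ} {c : ι → ℝ} {I B : ℝ}
    (hg : ∀ i, Integrable (g i) (μ i)) (hh : ∀ i, Integrable h (μ i))
    (hA : ∀ i, Integrable A (μ i)) (hbound : ∀ i, ∀ᵐ ω ∂μ i, |g i ω - h ω| ≤ A ω * c i)
    (hc : Tendsto c l (𝓝 0)) (hAlim : Tendsto (fun i => ∫ ω, A ω ∂μ i) l (𝓝 B))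
    (hhlim : Tendsto (fun i => ∫ ω, h ω ∂μ i) l (𝓝 I)) :
    Tendsto (fun i => ∫ ω, g i ω ∂μ i) l (𝓝 I) := by
  have hdist : ∀ i, ‖(∫ ω, g i ω ∂μ i) - ∫ ω, h ω ∂μ i‖ ≤ (∫ ω, A ω ∂μ i) * c i := fun i => by
    rw [← integral_sub (hg i) (hh i), ← integral_mul_const]
    exact norm_integral_le_of_norm_le ((hA i).mul_const (c i)) (hbound i)
  have hdist0 : Tendsto (fun i => (∫ ω, A ω ∂μ i) * c i) l (𝓝 0) := by
    simpa using hAlim.mul hc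
  simpa using (squeeze_zero_norm hdist hdist0).add hhlim

theorem stmt9_general
    {Ω : Type*} [MeasurableSpace Ω]
    (κ : Kernel ℝ Ω)
    (V : Set ℝ) (hVconn : V.OrdConnected)
    (x₀ : ℝ) (hx₀ : x₀ ∈ V)
    (U U' : Ω → ℝ → ℝ)
    -- (i) a.e. differentiability on V, with derivative U'
    (hderiv : ∀ x ∈ V, ∀ᵐ ω ∂(κ x), ∀ z ∈ V, HasDerivAt (U ω) (U' ω z) z)
    -- (i) a measurable Lipschitz modulus A for the derivative
    (A : Ω → ℝ)
    (hlip : ∀ x ∈ V, ∀ᵐ ω ∂(κ x), ∀ z ∈ V, ∀ z' ∈ V,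
      |U' ω z' - U' ω z| ≤ A ω * |z' - z|)
    (hAint : ∀ x ∈ V, Integrable A (κ x))
    (hAcont : ContinuousOn (fun x => ∫ ω, A ω ∂(κ x)) V)
    -- (ii) continuity in x of the conditional mean of the derivative
    (hU'cont : ∀ z' ∈ V, ContinuousOn (fun x => ∫ ω, U' ω z' ∂(κ x)) V)
    -- integrability (so that all the conditional means below are well defined)
    (hUint : ∀ x ∈ V, ∀ z ∈ V, Integrable (fun ω => U ω z) (κ x))
    (hU'int : ∀ x ∈ V, ∀ z ∈ V, Integrable (fun ω => U' ω z) (κ x))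
    -- the sequences
    (xs : ℕ → ℝ) (hxs : ∀ n, xs n ∈ V) (hxsto : Tendsto xs atTop (nhds x₀))
    (q : ℝ → ℝ) (hq : ∀ n, q (xs n) ∈ V) (hqne : ∀ n, q (xs n) ≠ xs n)
    (hqto : Tendsto (fun n => q (xs n)) atTop (nhds x₀)) :
    Tendsto (fun n => ∫ ω, (U ω (q (xs n)) - U ω (xs n)) / (q (xs n) - xs n) ∂(κ (xs n)))
      atTop (nhds (∫ ω, U' ω x₀ ∂(κ x₀))) := by
  have hxV : Tendsto xs atTop (𝓝[V] x₀) :=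
    tendsto_nhdsWithin_iff.2 ⟨hxsto, Eventually.of_forall hxs⟩
  have hc : Tendsto (fun n => |q (xs n) - xs n| + |xs n - x₀|) atTop (𝓝 0) := by
    simpa using (hqto.sub hxsto).abs.add (hxsto.sub_const x₀).abs
  refine tendsto_integral_of_abs_sub_le_mul
    (fun n => ((hUint _ (hxs n) _ (hq n)).sub (hUint _ (hxs n) _ (hxs n))).div_const _)
    (fun n => hU'int _ (hxs n) x₀ hx₀) (fun n => hAint _ (hxs n)) (fun n => ?_) hc
    ((hAcont x₀ hx₀).tendsto.comp hxV) ((hU'cont x₀ hx₀ x₀ hx₀).tendsto.comp hxV)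
  filter_upwards [hderiv _ (hxs n), hlip _ (hxs n)] with ω hd hl
  exact abs_slope_sub_deriv_le hVconn hd hl hx₀ (hxs n) (hq n) (hqne n)

/-- convergence of the identified normalized treatment effects to the
average marginal effect. Under a.e. differentiability with a Lipschitz-in-`z`
derivative whose modulus has a continuous conditional mean, and continuity in `x` of
the conditional mean of the derivative, the normalized effects
`∫ [U(ω, q(xₙ)) − U(ω, xₙ)]/(q(xₙ) − xₙ) dκ(xₙ)` converge to
`∫ ∂U/∂z(ω, x₀) dκ(x₀)` along any sequences `xₙ → x₀`, `q(xₙ) → x₀` in `𝒱`. -/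
theorem stmt9
    {Ω : Type*} [MeasurableSpace Ω]
    (κ : Kernel ℝ Ω) [IsMarkovKernel κ]
    (V : Set ℝ) (hVopen : IsOpen V) (hVconn : V.OrdConnected)
    (x₀ : ℝ) (hx₀ : x₀ ∈ V)
    (U U' : Ω → ℝ → ℝ)
    (hUmeas : Measurable (Function.uncurry U))
    (hU'meas : Measurable (Function.uncurry U'))
    -- (i) a.e. differentiability on V, with derivative U'
    (hderiv : ∀ x ∈ V, ∀ᵐ ω ∂(κ x), ∀ z ∈ V, HasDerivAt (U ω) (U' ω z) z)
    -- (i) a measurable Lipschitz modulus A for the derivative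
    (A : Ω → ℝ) (hAmeas : Measurable A) (hA0 : ∀ ω, 0 ≤ A ω)
    (hlip : ∀ x ∈ V, ∀ᵐ ω ∂(κ x), ∀ z ∈ V, ∀ z' ∈ V,
      |U' ω z' - U' ω z| ≤ A ω * |z' - z|)
    (hAint : ∀ x ∈ V, Integrable A (κ x))
    (hAcont : ContinuousOn (fun x => ∫ ω, A ω ∂(κ x)) V)
    -- (ii) continuity in x of the conditional mean of the derivative
    (hU'cont : ∀ z' ∈ V, ContinuousOn (fun x => ∫ ω, U' ω z' ∂(κ x)) V)
    -- integrability (so that all the conditional means below are well defined)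
    (hUint : ∀ x ∈ V, ∀ z ∈ V, Integrable (fun ω => U ω z) (κ x))
    (hU'int : ∀ x ∈ V, ∀ z ∈ V, Integrable (fun ω => U' ω z) (κ x))
    -- the sequences
    (xs : ℕ → ℝ) (hxs : ∀ n, xs n ∈ V) (hxsto : Tendsto xs atTop (nhds x₀))
    (q : ℝ → ℝ) (hq : ∀ n, q (xs n) ∈ V) (hqne : ∀ n, q (xs n) ≠ xs n)
    (hqto : Tendsto (fun n => q (xs n)) atTop (nhds x₀)) :
    Tendsto (fun n => ∫ ω, (U ω (q (xs n)) - U ω (xs n)) / (q (xs n) - xs n) ∂(κ (xs n)))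
      atTop (nhds (∫ ω, U' ω x₀ ∂(κ x₀))) :=
  stmt9_general κ V hVconn x₀ hx₀ U U' hderiv A hlip hAint hAcont hU'cont hUint hU'int xs hxs hxsto
    q hq hqne hqto
end

section
/- Let F_{10}, F_{20} : ℝ → [0,1] be nondecreasing and right-continuous, and fix x ∈ ℝ with p := F_{20}(x) ∈ (0,1). Define the generalized inverse F^{−1}(u) := inf{z ∈ ℝ : F(z) ≥ u} and set q := F_{10}^{−1}(p). Assume F_{10}(q) = p and F_{10} is differentiable at q with F_{10}'(q) > 0. Let (t_n) be a sequence of nonzero reals with t_n → 0, and let h_{1n}, h_{2n} : ℝ → ℝ be bounded functions converging uniformly on ℝ to bounded continuous functions h_1, h_2 respectively, such that for every n the functions F_{10} + t_n h_{1n} and F_{20} + t_n h_{2n} are nondecreasing with values in [0,1]. Then lim_{n→∞} [ (F_{10} + t_n h_{1n})^{−1}( (F_{20} + t_n h_{2n})(x) ) − q ] / t_n = ( h_2(x) − h_1(q) ) / F_{10}'(q). -/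
/-!
Write `Gₙ = F₁₀ + tₙ h₁ₙ` and `cₙ = F₂₀(x) + tₙ h₂ₙ(x)`. For fixed `r`, the quotient
`(Gₙ(q + tₙ r) − cₙ) / tₙ` tends to `r F₁₀'(q) + h₁(q) − h₂(x)`, by differentiability of `F₁₀` at
`q`, `F₁₀(q) = F₂₀(x)` and uniform convergence of `h₁ₙ` with `h₁` continuous. Whenever this
quotient is negative at `r₀` and positive at `r₁`, monotonicity of `Gₙ` traps `Gₙ⁻¹(cₙ)` between
`q + tₙ r₀` and `q + tₙ r₁` (whatever the sign of `tₙ`), so `(Gₙ⁻¹(cₙ) − q) / tₙ ∈ [r₀, r₁]`.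
Taking `r₀, r₁` on either side of the root `(h₂(x) − h₁(q)) / F₁₀'(q)` gives the limit.
-/

open Set Filter Topology

/-- Generalized inverse (quantile function) of a function `F : ℝ → ℝ`. -/
noncomputable def ginv (F : ℝ → ℝ) (p : ℝ) : ℝ := sInf {z | p ≤ F z}

theorem ginv_mem_Icc {G : ℝ → ℝ} {a b c : ℝ} (hG : Monotone G) (ha : G a < c) (hb : c ≤ G b) :
    ginv G c ∈ Icc a b := by
  have hlow : a ∈ lowerBounds {z | c ≤ G z} := fun z hz =>
    le_of_not_gt fun hza => ((hG hza.le).trans_lt ha).not_ge hz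
  exact ⟨le_csInf ⟨b, hb⟩ hlow, csInf_le ⟨a, hlow⟩ hb⟩

theorem ginv_sub_div_mem_Icc {G : ℝ → ℝ} {q c t r₀ r₁ : ℝ} (hG : Monotone G) (ht : t ≠ 0)
    (h₀ : (G (q + t * r₀) - c) / t < 0) (h₁ : 0 < (G (q + t * r₁) - c) / t) :
    (ginv G c - q) / t ∈ Icc r₀ r₁ := by
  rcases ht.lt_or_gt with ht | ht
  · have h₀' := (div_lt_iff_of_neg ht).1 h₀
    have h₁' := (lt_div_iff_of_neg ht).1 h₁
    obtain ⟨hlo, hhi⟩ := ginv_mem_Icc (a := q + t * r₁) hG (by linarith)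
      (by linarith : c ≤ G (q + t * r₀))
    exact ⟨(le_div_iff_of_neg ht).2 (by linarith), (div_le_iff_of_neg ht).2 (by linarith)⟩
  · have h₀' := (div_lt_iff₀ ht).1 h₀
    have h₁' := (lt_div_iff₀ ht).1 h₁
    obtain ⟨hlo, hhi⟩ := ginv_mem_Icc (a := q + t * r₀) hG (by linarith)
      (by linarith : c ≤ G (q + t * r₁))
    exact ⟨(le_div_iff₀ ht).2 (by linarith), (div_le_iff₀ ht).2 (by linarith)⟩

theorem tendsto_ginv_sub_div {ι : Type*} {l : Filter ι} {G : ι → ℝ → ℝ} {c t : ι → ℝ}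
    {q d a : ℝ} (hG : ∀ n, Monotone (G n)) (ht : ∀ n, t n ≠ 0) (hd : 0 < d)
    (hφ : ∀ r, Tendsto (fun n => (G n (q + t n * r) - c n) / t n) l (𝓝 (r * d + a))) :
    Tendsto (fun n => (ginv (G n) (c n) - q) / t n) l (𝓝 (-a / d)) := by
  rw [Metric.nhds_basis_closedBall.tendsto_right_iff]
  intro ε hε
  have h₀ : (-a / d - ε) * d + a < 0 := by
    rw [sub_mul, div_mul_cancel₀ _ hd.ne']; linarith [mul_pos hε hd]
  have h₁ : 0 < (-a / d + ε) * d + a := by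
    rw [add_mul, div_mul_cancel₀ _ hd.ne']; linarith [mul_pos hε hd]
  filter_upwards [(hφ _).eventually_lt_const h₀, (hφ _).eventually_const_lt h₁] with n hn₀ hn₁
  rw [Real.closedBall_eq_Icc]
  exact ginv_sub_div_mem_Icc (hG n) (ht n) hn₀ hn₁

theorem HasDerivAt.tendsto_sub_div_mul {F : ℝ → ℝ} {d q : ℝ} (hF : HasDerivAt F d q)
    {ι : Type*} {l : Filter ι} {t : ι → ℝ} (ht : Tendsto t l (𝓝[≠] 0)) (r : ℝ) :
    Tendsto (fun n => (F (q + t n * r) - F q) / t n) l (𝓝 (r * d)) := by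
  have hline : HasDerivAt (fun s => F (q + s * r)) (r * d) 0 := by
    have hF' : HasDerivAt F d (q + 0 * r) := by rwa [zero_mul, add_zero]
    rw [mul_comm]
    exact hF'.comp 0 (by simpa using ((hasDerivAt_id' 0).mul_const r).const_add q)
  simpa only [Function.comp_def, smul_eq_mul, zero_add, zero_mul, add_zero, div_eq_inv_mul]
    using (hasDerivAt_iff_tendsto_slope_zero.1 hline).comp ht

theorem stmt16_general
    (F₁₀ F₂₀ : ℝ → ℝ)
    (x p : ℝ) (hp : p = F₂₀ x)
    (q : ℝ) (hF₁₀q : F₁₀ q = p)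
    (d : ℝ) (hd : 0 < d) (hder : HasDerivAt F₁₀ d q)
    (t : ℕ → ℝ) (ht0 : ∀ n, t n ≠ 0) (htto : Tendsto t atTop (nhds 0))
    (h₁n h₂n : ℕ → ℝ → ℝ) (h₁ h₂ : ℝ → ℝ)
    (hu₁ : TendstoUniformly h₁n h₁ atTop) (hu₂ : TendstoUniformly h₂n h₂ atTop)
    (hc₁ : Continuous h₁)
    (hmono : ∀ n, Monotone (fun z => F₁₀ z + t n * h₁n n z) ∧
      Monotone (fun z => F₂₀ z + t n * h₂n n z)) :
    Tendsto (fun n =>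
        (ginv (fun z => F₁₀ z + t n * h₁n n z) (F₂₀ x + t n * h₂n n x) - q) / t n)
      atTop (nhds ((h₂ x - h₁ q) / d)) := by
  have ht : Tendsto t atTop (𝓝[≠] 0) := tendsto_nhdsWithin_iff.2 ⟨htto, .of_forall ht0⟩
  have hφ : ∀ r, Tendsto (fun n =>
      (F₁₀ (q + t n * r) + t n * h₁n n (q + t n * r) - (F₂₀ x + t n * h₂n n x)) / t n)
      atTop (𝓝 (r * d + (h₁ q - h₂ x))) := by
    intro r
    have hqr : Tendsto (fun n => q + t n * r) atTop (𝓝 q) := by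
      simpa using (htto.mul_const r).const_add q
    rw [← add_sub_assoc]
    refine (((hder.tendsto_sub_div_mul ht r).add (hu₁.tendsto_comp hc₁.continuousAt hqr)).sub
      (hu₂.tendsto_at x)).congr fun n => ?_
    rw [hF₁₀q, hp]
    field_simp [ht0 n]
    ring
  rw [← neg_sub]
  exact tendsto_ginv_sub_div (fun n => (hmono n).1) ht0 hd hφ

/-- Hadamard differentiability, tangentially to continuous functions, of
the quantile-quantile map `(F₁, F₂) ↦ F₁⁻¹(F₂(x))` at `(F₁₀, F₂₀)`, where `F₁₀` is
differentiable at `q = F₁₀⁻¹(F₂₀(x))` with positive derivative: for perturbations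
`F₁₀ + tₙ h₁ₙ`, `F₂₀ + tₙ h₂ₙ` that remain cdf-like, with `h₁ₙ → h₁`, `h₂ₙ → h₂`
uniformly and `h₁, h₂` bounded continuous, the difference quotient converges to
`(h₂(x) − h₁(q))/F₁₀'(q)`. -/
theorem stmt16
    (F₁₀ F₂₀ : ℝ → ℝ)
    (hF₁₀m : Monotone F₁₀) (hF₂₀m : Monotone F₂₀)
    (hF₁₀rc : ∀ z : ℝ, ContinuousWithinAt F₁₀ (Ici z) z)
    (hF₂₀rc : ∀ z : ℝ, ContinuousWithinAt F₂₀ (Ici z) z)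
    (hF₁₀01 : ∀ z, F₁₀ z ∈ Icc (0:ℝ) 1) (hF₂₀01 : ∀ z, F₂₀ z ∈ Icc (0:ℝ) 1)
    (x p : ℝ) (hp : p = F₂₀ x) (hp01 : p ∈ Ioo (0:ℝ) 1)
    (q : ℝ) (hq : q = ginv F₁₀ p) (hF₁₀q : F₁₀ q = p)
    (d : ℝ) (hd : 0 < d) (hder : HasDerivAt F₁₀ d q)
    (t : ℕ → ℝ) (ht0 : ∀ n, t n ≠ 0) (htto : Tendsto t atTop (nhds 0))
    (h₁n h₂n : ℕ → ℝ → ℝ) (h₁ h₂ : ℝ → ℝ)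
    (hb₁n : ∀ n, ∃ C, ∀ z, |h₁n n z| ≤ C) (hb₂n : ∀ n, ∃ C, ∀ z, |h₂n n z| ≤ C)
    (hu₁ : TendstoUniformly h₁n h₁ atTop) (hu₂ : TendstoUniformly h₂n h₂ atTop)
    (hc₁ : Continuous h₁) (hc₂ : Continuous h₂)
    (hb₁ : ∃ C, ∀ z, |h₁ z| ≤ C) (hb₂ : ∃ C, ∀ z, |h₂ z| ≤ C)
    (hmono : ∀ n, Monotone (fun z => F₁₀ z + t n * h₁n n z) ∧
      Monotone (fun z => F₂₀ z + t n * h₂n n z))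
    (h01 : ∀ n z, F₁₀ z + t n * h₁n n z ∈ Icc (0:ℝ) 1 ∧
      F₂₀ z + t n * h₂n n z ∈ Icc (0:ℝ) 1) :
    Tendsto (fun n =>
        (ginv (fun z => F₁₀ z + t n * h₁n n z) (F₂₀ x + t n * h₂n n x) - q) / t n)
      atTop (nhds ((h₂ x - h₁ q) / d)) :=
  stmt16_general F₁₀ F₂₀ x p hp q hF₁₀q d hd hder t ht0 htto h₁n h₂n h₁ h₂ hu₁ hu₂ hc₁ hmono
end

section
/- Let f_1, f_2 : ℝ → ℝ be continuous strictly increasing bijections, and α, β : ℝ → ℝ Borel measurable such that for every x ∈ ℝ the map e ↦ α(e) + x·β(e) is strictly increasing. For t ∈ {1,2}, let (U_t, η_t) be pairs of real random variables such that (U_1, η_1) and (U_2, η_2) have the same joint distribution, let h_t : ℝ → ℝ be continuous and strictly increasing, X_t := h_t(η_t), and Y_t := f_t(α(U_t) + X_t·β(U_t)). Define Ũ_t(x) := f_2(α(U_t) + x·β(U_t)) and g_t := f_t ∘ f_2^{−1}. Then: (a) g_2 is the identity and g_1 : ℝ → ℝ is strictly increasing; (b) Y_t = g_t(Ũ_t(X_t))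 almost surely, and for each x the map u ↦ f_2(α(u) + x β(u)) has Ũ_t(x) as its value at U_t; (c) for every x ∈ ℝ, the joint distribution of (Ũ_t(x), η_t) is the same for t = 1 and t = 2; consequently, if in addition the cdf F_{η_t} = F_η is continuous and strictly increasing on ℝ, then V_t := F_{X_t}(X_t) = F_η(η_t) almost surely and the conditional distribution of Ũ_t(x) given V_t = v does not depend on t. -/
/-!
Everything follows from the joint law of `(U_t, η_t)` being time-invariant: `Ũ_t(x)` and
`F_η(η_t)` are fixed measurable functions of `U_t` and `η_t`, so `(Ũ_t(x), η_t)` and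
`(Ũ_t(x), F_η(η_t))` are pushforwards of that common law. Since `h_t` is strictly increasing,
`{X_t ≤ h_t(e)} = {η_t ≤ e}`, hence `F_{X_t}(X_t) = F_η(η_t)`. Finally `f₂⁻¹` undoes the `f₂`
built into `Ũ_t`, which gives `Y_t = g_t(Ũ_t(X_t))` with `g_t = f_t ∘ f₂⁻¹`.
-/

open MeasureTheory Set Filter

noncomputable def rcdf (μ : Measure ℝ) (x : ℝ) : ℝ := (μ (Iic x)).toReal

open ProbabilityTheory Function

lemma StrictMono.invFun_of_surjective {α β : Type*} [Nonempty α] [LinearOrder α] [Preorder β]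
    {f : α → β} (hf : StrictMono f) (hs : Surjective f) : StrictMono (invFun f) :=
  fun a b hab => hf.lt_iff_lt.mp (by rwa [rightInverse_invFun hs a, rightInverse_invFun hs b])

lemma rcdf_map_apply_of_strictMono (μ : Measure ℝ) {h : ℝ → ℝ} (hh : StrictMono h) (e : ℝ) :
    rcdf (μ.map h) (h e) = rcdf μ e := by
  have hpre : h ⁻¹' Iic (h e) = Iic e := by
    ext y
    simp [hh.le_iff_le]
  rw [rcdf, Measure.map_apply hh.monotone.measurable measurableSet_Iic, hpre, rcdf]

lemma rcdf_map_comp_of_strictMono {Ω : Type*} [MeasurableSpace Ω] (P : Measure Ω)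
    {η : Ω → ℝ} (hη : Measurable η) {h : ℝ → ℝ} (hh : StrictMono h) (ω : Ω) :
    rcdf (P.map fun ω => h (η ω)) (h (η ω)) = rcdf (P.map η) (η ω) := by
  change rcdf (P.map (h ∘ η)) _ = _
  rw [← Measure.map_map hh.monotone.measurable hη, rcdf_map_apply_of_strictMono _ hh]

lemma ProbabilityTheory.IdentDistrib.map_prodMap_eq {Ω Ω' α β γ δ : Type*} [MeasurableSpace Ω]
    [MeasurableSpace Ω'] [MeasurableSpace α] [MeasurableSpace β] [MeasurableSpace γ]
    [MeasurableSpace δ] {P : Measure Ω} {Q : Measure Ω'} {U₁ : Ω → α} {η₁ : Ω → β}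
    {U₂ : Ω' → α} {η₂ : Ω' → β}
    (hid : IdentDistrib (fun ω => (U₁ ω, η₁ ω)) (fun ω => (U₂ ω, η₂ ω)) P Q)
    {φ : α → γ} {ψ : β → δ} (hφ : Measurable φ) (hψ : Measurable ψ) :
    P.map (fun ω => (φ (U₁ ω), ψ (η₁ ω))) = Q.map (fun ω => (φ (U₂ ω), ψ (η₂ ω))) :=
  (hid.comp (hφ.prodMap hψ)).map_eq

theorem stmt18_general
    {Ω : Type*} [MeasurableSpace Ω] (P : Measure Ω)
    -- the time trends f₁, f₂: continuous strictly increasing bijections of ℝ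
    (f₁ f₂ : ℝ → ℝ)
    (hf₁m : StrictMono f₁) (hf₂m : StrictMono f₂)
    (hf₂b : Function.Bijective f₂)
    -- the coefficient functions
    (α β : ℝ → ℝ) (hα : Measurable α) (hβ : Measurable β)
    -- the unobservables, with time-invariant joint law
    (U₁ U₂ η₁ η₂ : Ω → ℝ)
    (hU₁ : Measurable U₁) (hU₂ : Measurable U₂)
    (hη₁ : Measurable η₁) (hη₂ : Measurable η₂)
    (hsame : P.map (fun ω => (U₁ ω, η₁ ω)) = P.map (fun ω => (U₂ ω, η₂ ω)))
    -- the first stages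
    (h₁ h₂ : ℝ → ℝ)
    (hh₁m : StrictMono h₁) (hh₂m : StrictMono h₂)
    (X₁ X₂ : Ω → ℝ) (hX₁ : X₁ = fun ω => h₁ (η₁ ω)) (hX₂ : X₂ = fun ω => h₂ (η₂ ω))
    -- outcomes
    (Y₁ Y₂ : Ω → ℝ)
    (hY₁ : Y₁ = fun ω => f₁ (α (U₁ ω) + X₁ ω * β (U₁ ω)))
    (hY₂ : Y₂ = fun ω => f₂ (α (U₂ ω) + X₂ ω * β (U₂ ω)))
    -- the redefined unobservables and time trends
    (Ut₁ Ut₂ : ℝ → Ω → ℝ)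
    (hUt₁ : Ut₁ = fun x ω => f₂ (α (U₁ ω) + x * β (U₁ ω)))
    (hUt₂ : Ut₂ = fun x ω => f₂ (α (U₂ ω) + x * β (U₂ ω)))
    (g₁ g₂ : ℝ → ℝ)
    (hg₁ : g₁ = f₁ ∘ Function.invFun f₂) (hg₂ : g₂ = f₂ ∘ Function.invFun f₂) :
    -- (a)
    (g₂ = id ∧ StrictMono g₁) ∧
    -- (b)
    ((∀ᵐ ω ∂P, Y₁ ω = g₁ (Ut₁ (X₁ ω) ω) ∧ Y₂ ω = g₂ (Ut₂ (X₂ ω) ω)) ∧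
      (∀ (x : ℝ) (ω : Ω), Ut₁ x ω = f₂ (α (U₁ ω) + x * β (U₁ ω)) ∧
        Ut₂ x ω = f₂ (α (U₂ ω) + x * β (U₂ ω)))) ∧
    -- (c)
    ((∀ x : ℝ, P.map (fun ω => (Ut₁ x ω, η₁ ω)) = P.map (fun ω => (Ut₂ x ω, η₂ ω))) ∧
      (Continuous (rcdf (P.map η₁)) → StrictMono (rcdf (P.map η₁)) →
        (∀ᵐ ω ∂P, rcdf (P.map X₁) (X₁ ω) = rcdf (P.map η₁) (η₁ ω)) ∧
        (∀ᵐ ω ∂P, rcdf (P.map X₂) (X₂ ω) = rcdf (P.map η₁) (η₂ ω)) ∧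
        (∀ x : ℝ,
          P.map (fun ω => (Ut₁ x ω, rcdf (P.map η₁) (η₁ ω)))
            = P.map (fun ω => (Ut₂ x ω, rcdf (P.map η₁) (η₂ ω)))))) := by
  subst hX₁ hX₂ hY₁ hY₂ hUt₁ hUt₂ hg₁ hg₂
  have hleft : LeftInverse (invFun f₂) f₂ := leftInverse_invFun hf₂m.injective
  have hid : IdentDistrib (fun ω => (U₁ ω, η₁ ω)) (fun ω => (U₂ ω, η₂ ω)) P P :=
    ⟨(hU₁.prodMk hη₁).aemeasurable, (hU₂.prodMk hη₂).aemeasurable, hsame⟩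
  have hŨ : ∀ x : ℝ, Measurable fun u => f₂ (α u + x * β u) := fun x =>
    hf₂m.monotone.measurable.comp (hα.add (hβ.const_mul x))
  refine ⟨⟨funext (rightInverse_invFun hf₂b.2), hf₁m.comp (hf₂m.invFun_of_surjective hf₂b.2)⟩,
    ⟨ae_of_all _ fun _ => ⟨congrArg f₁ (hleft _).symm, congrArg f₂ (hleft _).symm⟩,
      fun _ _ => ⟨rfl, rfl⟩⟩,
    fun x => hid.map_prodMap_eq (hŨ x) measurable_id, fun _ hFm => ?_⟩
  have hη : P.map η₁ = P.map η₂ := (hid.comp measurable_snd).map_eq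
  refine ⟨ae_of_all _ fun ω => rcdf_map_comp_of_strictMono P hη₁ hh₁m ω,
    ae_of_all _ fun ω => hη ▸ rcdf_map_comp_of_strictMono P hη₂ hh₂m ω, fun x => ?_⟩
  exact hid.map_prodMap_eq (hŨ x) hFm.monotone.measurable

/-- the quantile-regression-type model `Y_t = f_t(α(U_t) + X_t β(U_t))`,
`X_t = h_t(η_t)`, with time-invariant joint law of `(U_t, η_t)`, satisfies the
structural assumptions of the paper with `Ũ_t(x) = f₂(α(U_t) + x β(U_t))` and
`g_t = f_t ∘ f₂⁻¹`: (a) `g₂ = id` and `g₁` is strictly increasing; (b) `Y_t` equals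
`g_t(Ũ_t(X_t))` a.s. and `Ũ_t(x)` is the value of `u ↦ f₂(α(u) + x β(u))` at `U_t`;
(c) `(Ũ_t(x), η_t)` is equidistributed across `t`, and if moreover the common cdf
`F_η` is continuous and strictly increasing then `V_t = F_η(η_t)` a.s. and the
(joint, hence conditional-on-`V_t = v`) law of `(Ũ_t(x), V_t)` does not depend
on `t`. -/
theorem stmt18
    {Ω : Type*} [MeasurableSpace Ω] (P : Measure Ω) (hP : IsProbabilityMeasure P)
    -- the time trends f₁, f₂: continuous strictly increasing bijections of ℝ
    (f₁ f₂ : ℝ → ℝ)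
    (hf₁c : Continuous f₁) (hf₂c : Continuous f₂)
    (hf₁m : StrictMono f₁) (hf₂m : StrictMono f₂)
    (hf₁b : Function.Bijective f₁) (hf₂b : Function.Bijective f₂)
    -- the coefficient functions
    (α β : ℝ → ℝ) (hα : Measurable α) (hβ : Measurable β)
    (hαβ : ∀ x : ℝ, StrictMono (fun e => α e + x * β e))
    -- the unobservables, with time-invariant joint law
    (U₁ U₂ η₁ η₂ : Ω → ℝ)
    (hU₁ : Measurable U₁) (hU₂ : Measurable U₂)
    (hη₁ : Measurable η₁) (hη₂ : Measurable η₂)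
    (hsame : P.map (fun ω => (U₁ ω, η₁ ω)) = P.map (fun ω => (U₂ ω, η₂ ω)))
    -- the first stages
    (h₁ h₂ : ℝ → ℝ) (hh₁c : Continuous h₁) (hh₂c : Continuous h₂)
    (hh₁m : StrictMono h₁) (hh₂m : StrictMono h₂)
    (X₁ X₂ : Ω → ℝ) (hX₁ : X₁ = fun ω => h₁ (η₁ ω)) (hX₂ : X₂ = fun ω => h₂ (η₂ ω))
    -- outcomes
    (Y₁ Y₂ : Ω → ℝ)
    (hY₁ : Y₁ = fun ω => f₁ (α (U₁ ω) + X₁ ω * β (U₁ ω)))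
    (hY₂ : Y₂ = fun ω => f₂ (α (U₂ ω) + X₂ ω * β (U₂ ω)))
    -- the redefined unobservables and time trends
    (Ut₁ Ut₂ : ℝ → Ω → ℝ)
    (hUt₁ : Ut₁ = fun x ω => f₂ (α (U₁ ω) + x * β (U₁ ω)))
    (hUt₂ : Ut₂ = fun x ω => f₂ (α (U₂ ω) + x * β (U₂ ω)))
    (g₁ g₂ : ℝ → ℝ)
    (hg₁ : g₁ = f₁ ∘ Function.invFun f₂) (hg₂ : g₂ = f₂ ∘ Function.invFun f₂) :
    -- (a)
    (g₂ = id ∧ StrictMono g₁) ∧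
    -- (b)
    ((∀ᵐ ω ∂P, Y₁ ω = g₁ (Ut₁ (X₁ ω) ω) ∧ Y₂ ω = g₂ (Ut₂ (X₂ ω) ω)) ∧
      (∀ (x : ℝ) (ω : Ω), Ut₁ x ω = f₂ (α (U₁ ω) + x * β (U₁ ω)) ∧
        Ut₂ x ω = f₂ (α (U₂ ω) + x * β (U₂ ω)))) ∧
    -- (c)
    ((∀ x : ℝ, P.map (fun ω => (Ut₁ x ω, η₁ ω)) = P.map (fun ω => (Ut₂ x ω, η₂ ω))) ∧
      (Continuous (rcdf (P.map η₁)) → StrictMono (rcdf (P.map η₁)) →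
        (∀ᵐ ω ∂P, rcdf (P.map X₁) (X₁ ω) = rcdf (P.map η₁) (η₁ ω)) ∧
        (∀ᵐ ω ∂P, rcdf (P.map X₂) (X₂ ω) = rcdf (P.map η₁) (η₂ ω)) ∧
        (∀ x : ℝ,
          P.map (fun ω => (Ut₁ x ω, rcdf (P.map η₁) (η₁ ω)))
            = P.map (fun ω => (Ut₂ x ω, rcdf (P.map η₁) (η₂ ω)))))) :=
  stmt18_general P f₁ f₂ hf₁m hf₂m hf₂b α β hα hβ U₁ U₂ η₁ η₂ hU₁ hU₂ hη₁ hη₂ hsame h₁ h₂ hh₁m hh₂m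
    X₁ X₂ hX₁ hX₂ Y₁ Y₂ hY₁ hY₂ Ut₁ Ut₂ hUt₁ hUt₂ g₁ g₂ hg₁ hg₂
end
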